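/- Let R be a commutative ring, p(t) ∈ R[t] with p(0) = 1 and degree d with unit leading coefficient, and N an R-module. For each m ∈ ℤ, the sequence of R-modules 0 → ⊕_{n∈ℤ} N → ⊕_{n∈ℤ} N → N^{⊕ d} → 0 is exact, where the first map acts by the column-finite matrix M_{ij} = (−1)^j(−1)^{(i−j)} β_{i−j} formed from the coefficients p(t) = Σ (−1)^i β_i t^i, and the second map is the composite of the identification ⊕_{n∈ℤ} N ≅ R[t,t⁻¹] ⊗_R N, reduction modulo p(t), and the basis identification (R[t]/⟨p(t)⟩) ⊗_R N ≅ N^{⊕ d}. -/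

import Mathlib

open Polynomial TensorProduct

/-- The column-finite matrix `M_{ij} = (-1)^j (-1)^{i-j} β_{i-j}` acting on `⊕_{n∈ℤ} N`. -/
noncomputable def matrixMap (R : Type*) [CommRing R] (d : ℕ) (β : ℕ → R)
    (N : Type*) [AddCommGroup N] [Module R N] : (ℤ →₀ N) →ₗ[R] (ℤ →₀ N) :=
  Finsupp.lsum R fun j : ℤ =>
    ∑ r ∈ Finset.range (d + 1),
      ((((-1 : Rˣ) ^ j : Rˣ) : R) * ((-1 : R) ^ r * β r)) •
        (Finsupp.lsingle (j + r) : N →ₗ[R] (ℤ →₀ N))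

/-- The identification `⊕_{n∈ℤ} N ≅ R[t,t⁻¹] ⊗_R N`, position `j ↦ t^j ⊗ -`. -/
noncomputable def laurentIdent (R : Type*) [CommRing R]
    (N : Type*) [AddCommGroup N] [Module R N] :
    (ℤ →₀ N) →ₗ[R] (LaurentPolynomial R ⊗[R] N) :=
  Finsupp.lsum R fun j : ℤ =>
    TensorProduct.mk R (LaurentPolynomial R) N (LaurentPolynomial.T j)

/-- Since `p(0) = 1`, the class of `t` is a unit in `R[t]/⟨p⟩`. -/
noncomputable def tUnit (R : Type*) [CommRing R] (p : Polynomial R) (hp : p.coeff 0 = 1) :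
    (Polynomial R ⧸ Ideal.span {p})ˣ :=
  Units.mkOfMulEqOne (Ideal.Quotient.mk (Ideal.span {p}) X)
    (Ideal.Quotient.mk (Ideal.span {p}) (-p.divX)) (by
      rw [← map_mul, ← map_one (Ideal.Quotient.mk (Ideal.span {p})),
        Ideal.Quotient.mk_eq_mk_iff_sub_mem]
      have h : p.divX * X + C (p.coeff 0) = p := p.divX_mul_X_add
      rw [hp, map_one] at h
      have h2 : X * -p.divX - 1 = -p := by linear_combination -h
      rw [h2]
      exact neg_mem (Ideal.subset_span (Set.mem_singleton p)))

/-- Reduction modulo `p` from Laurent polynomials, `t ↦` the unit class of `t`. -/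
noncomputable def laurentToQuot (R : Type*) [CommRing R] (p : Polynomial R)
    (hp : p.coeff 0 = 1) :
    LaurentPolynomial R →ₐ[R] (Polynomial R ⧸ Ideal.span {p}) :=
  AddMonoidAlgebra.lift R (Polynomial R ⧸ Ideal.span {p}) ℤ
    ((Units.coeHom _).comp (zpowersHom _ (tUnit R p hp)))

/-- The identification `(R[t]/⟨p⟩) ⊗_R N ≅ N^{⊕d}` coming from the basis `1, t, …, t^{d-1}`
(as a map `N^{⊕d} → (R[t]/⟨p⟩) ⊗_R N`). -/
noncomputable def basisMap (R : Type*) [CommRing R] (p : Polynomial R) (d : ℕ)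
    (N : Type*) [AddCommGroup N] [Module R N] :
    (Fin d → N) →ₗ[R] ((Polynomial R ⧸ Ideal.span {p}) ⊗[R] N) :=
  ∑ n : Fin d,
    (TensorProduct.mk R (Polynomial R ⧸ Ideal.span {p}) N
        (Ideal.Quotient.mk (Ideal.span {p}) (X ^ (n : ℕ)))).comp
      (LinearMap.proj n : (Fin d → N) →ₗ[R] N)

/-!
Under `⊕_{n∈ℤ} N ≅ R[t,t⁻¹] ⊗_R N` the matrix acts as `q(t) ↦ q(-t) p(t)`: multiplication by `p`
after the sign twist `tʲ ↦ (-1)ʲ tʲ`. As `p(0) = 1`, `t` is invertible modulo `p`, and `p` is a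
non-zero-divisor since its leading coefficient is a unit, so
`0 → R[t,t⁻¹] → R[t,t⁻¹] → R[t]/⟨p⟩ → 0` (multiplication by `p`, reduction) is exact. The
quotient is free on `1, t, …, t^{d-1}`, so this sequence splits and stays exact after `⊗_R N`.
-/

open LaurentPolynomial (T)

theorem Function.Exact.rTensor_injective_of_projective {R M N P : Type*} [CommRing R]
    [AddCommGroup M] [AddCommGroup N] [AddCommGroup P] [Module R M] [Module R N] [Module R P]
    [Module.Projective R P] {f : M →ₗ[R] N} {g : N →ₗ[R] P} (hfg : Function.Exact f g)
    (hf : Function.Injective f) (hg : Function.Surjective g)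
    (Q : Type*) [AddCommGroup Q] [Module R Q] :
    Function.Injective (f.rTensor Q) := by
  obtain ⟨s, hs⟩ := Module.projective_lifting_property g LinearMap.id hg
  obtain ⟨r, hr⟩ := ((hfg.split_tfae hf hg).out 0 1).mp (by exact ⟨s, hs⟩)
  refine Function.LeftInverse.injective (g := r.rTensor Q) fun x => ?_
  rw [← LinearMap.comp_apply, ← LinearMap.rTensor_comp, hr, LinearMap.rTensor_id,
    LinearMap.id_apply]

theorem Module.Basis.bijective_sum_mk_comp_proj {R M ι : Type*} [CommRing R] [AddCommGroup M]
    [Module R M] [Fintype ι] [DecidableEq ι] (b : Module.Basis ι R M)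
    (N : Type*) [AddCommGroup N] [Module R N] :
    Function.Bijective
      ⇑(∑ i, TensorProduct.mk R M N (b i) ∘ₗ LinearMap.proj i : (ι → N) →ₗ[R] M ⊗[R] N) := by
  have : ∑ i, TensorProduct.mk R M N (b i) ∘ₗ LinearMap.proj i =
      ((Finsupp.linearEquivFunOnFinite R N ι).symm ≪≫ₗ
        (TensorProduct.equivFinsuppOfBasisLeft b).symm).toLinearMap := by
    refine LinearMap.pi_ext fun i x => ?_
    simp [Pi.single_apply, TensorProduct.tmul_ite]
  rw [this]
  exact LinearEquiv.bijective _

namespace Finsupp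

variable {R ι N : Type*} [CommRing R] [AddCommGroup N] [Module R N]

noncomputable def unitsSMulEquiv (u : ι → Rˣ) : (ι →₀ N) ≃ₗ[R] (ι →₀ N) :=
  LinearEquiv.ofLinearMap (lsum R fun i => (u i : R) • lsingle i)
    (lsum R fun i => ((u i)⁻¹ : Rˣ).val • lsingle i)
    (by ext; simp [smul_smul]) (by ext; simp [smul_smul])

theorem unitsSMulEquiv_single (u : ι → Rˣ) (i : ι) (x : N) :
    unitsSMulEquiv u (single i x) = (u i : R) • single i x := by
  simp [unitsSMulEquiv]

end Finsupp

section Laurent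

variable (R : Type*) [CommRing R]

noncomputable def laurentIdentEquiv (N : Type*) [AddCommGroup N] [Module R N] :
    (ℤ →₀ N) ≃ₗ[R] LaurentPolynomial R ⊗[R] N :=
  (TensorProduct.equivFinsuppOfBasisLeft (AddMonoidAlgebra.basis ℤ R)).symm

theorem laurentIdentEquiv_toLinearMap (N : Type*) [AddCommGroup N] [Module R N] :
    (laurentIdentEquiv R N).toLinearMap = laurentIdent R N := by
  rw [laurentIdentEquiv, TensorProduct.equivFinsuppOfBasisLeft_symm]
  rfl

theorem laurentIdentEquiv_single (N : Type*) [AddCommGroup N] [Module R N] (j : ℤ) (x : N) :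
    laurentIdentEquiv R N (Finsupp.single j x) = T j ⊗ₜ x := by
  rw [← LinearEquiv.coe_coe, laurentIdentEquiv_toLinearMap]
  simp [laurentIdent]

theorem mulLeft_toLaurent_injective {p : R[X]} (hp : p ∈ nonZeroDivisors R[X]) :
    Function.Injective (LinearMap.mulLeft R (toLaurent p)) := by
  have hp' := IsLocalization.nonZeroDivisors_le_comap (Submonoid.powers (X : R[X]))
    (LaurentPolynomial R) hp
  rw [Submonoid.mem_comap, LaurentPolynomial.algebraMap_eq_toLaurent] at hp'
  exact (isRegular_iff_mem_nonZeroDivisors.mpr hp').left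

variable (p : R[X]) (hp0 : p.coeff 0 = 1)

theorem laurentToQuot_toLaurent (f : R[X]) :
    laurentToQuot R p hp0 (toLaurent f) = Ideal.Quotient.mk (Ideal.span {p}) f := by
  have : (laurentToQuot R p hp0).comp toLaurentAlg = Ideal.Quotient.mkₐ R (Ideal.span {p}) := by
    refine Polynomial.algHom_ext ?_
    change laurentToQuot R p hp0 (toLaurent X) = _
    rw [toLaurent_X, laurentToQuot, LaurentPolynomial.T, AddMonoidAlgebra.lift_single]
    simp [tUnit]
  exact DFunLike.congr_fun this f

theorem laurentToQuot_surjective : Function.Surjective (laurentToQuot R p hp0) := by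
  intro y
  obtain ⟨f, rfl⟩ := Ideal.Quotient.mk_surjective y
  exact ⟨toLaurent f, laurentToQuot_toLaurent R p hp0 f⟩

theorem ker_laurentToQuot :
    LinearMap.ker (laurentToQuot R p hp0).toLinearMap =
      LinearMap.range (LinearMap.mulLeft R (toLaurent p)) := by
  ext x
  simp only [LinearMap.mem_ker, LinearMap.mem_range, AlgHom.toLinearMap_apply,
    LinearMap.mulLeft_apply]
  obtain ⟨n, f, hf⟩ := x.exists_T_pow
  have hx : x = toLaurent f * T (-n) := by
    rw [hf, mul_assoc, ← LaurentPolynomial.T_add, add_neg_cancel, LaurentPolynomial.T_zero, mul_one]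
  constructor
  · intro hx0
    have : Ideal.Quotient.mk (Ideal.span {p}) f = 0 := by
      rw [← laurentToQuot_toLaurent R p hp0, hf, map_mul, hx0, zero_mul]
    obtain ⟨c, rfl⟩ := Ideal.mem_span_singleton.mp (Ideal.Quotient.eq_zero_iff_mem.mp this)
    exact ⟨toLaurent c * T (-n), by rw [hx, map_mul, mul_assoc]⟩
  · rintro ⟨y, rfl⟩
    rw [map_mul, laurentToQuot_toLaurent, Ideal.Quotient.eq_zero_iff_mem.mpr
      (Ideal.mem_span_singleton_self p), zero_mul]

end Laurent

theorem toLaurent_sum_C_mul_X_pow_mul_T (R : Type*) [Semiring R] (d : ℕ) (c : ℕ → R) (j : ℤ) :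
    toLaurent (∑ i ∈ Finset.range (d + 1), C (c i) * X ^ i) * T j =
      ∑ i ∈ Finset.range (d + 1), c i • T (j + i) := by
  simp only [map_sum, Finset.sum_mul, toLaurent_C_mul_X_pow, mul_assoc, ← LaurentPolynomial.T_add,
    LaurentPolynomial.smul_eq_C_mul, add_comm j]

theorem laurentIdent_comp_matrixMap (R : Type*) [CommRing R] (d : ℕ) (β : ℕ → R) (p : R[X])
    (hp : p = ∑ i ∈ Finset.range (d + 1), C ((-1 : R) ^ i * β i) * X ^ i)
    (N : Type*) [AddCommGroup N] [Module R N] :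
    (LinearMap.mulLeft R (toLaurent p)).rTensor N ∘ₗ
        (Finsupp.unitsSMulEquiv (fun j : ℤ => (-1 : Rˣ) ^ j) ≪≫ₗ
          laurentIdentEquiv R N).toLinearMap =
      (laurentIdentEquiv R N).toLinearMap ∘ₗ matrixMap R d β N := by
  subst hp
  refine Finsupp.lhom_ext fun j x => ?_
  simp only [LinearMap.comp_apply, LinearEquiv.coe_coe, LinearEquiv.trans_apply,
    Finsupp.unitsSMulEquiv_single, map_smul, laurentIdentEquiv_single, LinearMap.rTensor_tmul,
    LinearMap.mulLeft_apply, toLaurent_sum_C_mul_X_pow_mul_T]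
  simp only [matrixMap, Finsupp.lsum_single, LinearMap.sum_apply, map_sum, LinearMap.smul_apply,
    Finsupp.lsingle_apply, map_smul, laurentIdentEquiv_single, Finset.smul_sum, smul_tmul',
    sum_tmul, smul_smul]

theorem Polynomial.Monic.exists_basis_quotient {R : Type*} [CommRing R] {q : R[X]} (hq : q.Monic)
    {I : Ideal R[X]} (hI : Ideal.span {q} = I) {d : ℕ} (hd : q.natDegree = d) :
    ∃ b : Module.Basis (Fin d) R (R[X] ⧸ I), ∀ n, b n = Ideal.Quotient.mk I (X ^ (n : ℕ)) := by
  subst hI hd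
  refine ⟨(AdjoinRoot.powerBasis' hq).basis, fun n => ?_⟩
  have h := (AdjoinRoot.powerBasis' hq).basis_eq_pow n
  rw [AdjoinRoot.powerBasis'_gen, ← AdjoinRoot.mk_X, ← map_pow] at h
  exact h

theorem Polynomial.exists_basis_quotient_of_isUnit_leadingCoeff {R : Type*} [CommRing R]
    {p : R[X]} (hlead : IsUnit p.leadingCoeff) {d : ℕ} (hd : p.natDegree = d) :
    ∃ b : Module.Basis (Fin d) R (R[X] ⧸ Ideal.span {p}),
      ∀ n, b n = Ideal.Quotient.mk (Ideal.span {p}) (X ^ (n : ℕ)) := by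
  have hu : IsUnit (C ↑hlead.unit⁻¹ : R[X]) := isUnit_C.mpr (Units.isUnit _)
  exact (monic_C_mul_of_mul_leadingCoeff_eq_one (by simp)).exists_basis_quotient
    (Ideal.span_singleton_mul_left_unit hu p)
    (by rw [natDegree_C_mul_of_isUnit (Units.isUnit _), hd])

theorem basisMap_bijective (R : Type*) [CommRing R] (p : R[X]) (d : ℕ)
    (N : Type*) [AddCommGroup N] [Module R N] (b : Module.Basis (Fin d) R (R[X] ⧸ Ideal.span {p}))
    (hb : ∀ n, b n = Ideal.Quotient.mk (Ideal.span {p}) (X ^ (n : ℕ))) :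
    Function.Bijective (basisMap R p d N) := by
  simp only [basisMap, ← hb]
  exact b.bijective_sum_mk_comp_proj N

theorem stmt_18_general (R : Type*) [CommRing R] (d : ℕ) (β : ℕ → R)
    (p : Polynomial R)
    (hp : p = ∑ i ∈ Finset.range (d + 1), Polynomial.C ((-1 : R) ^ i * β i) * X ^ i)
    (hp0 : p.coeff 0 = 1) (hdeg : p.degree = d) (hlead : IsUnit p.leadingCoeff)
    (N : Type*) [AddCommGroup N] [Module R N] :
    Function.Injective ⇑(matrixMap R d β N) ∧
    LinearMap.range (matrixMap R d β N) =
      LinearMap.ker ((LinearMap.rTensor N (laurentToQuot R p hp0).toLinearMap).comp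
        (laurentIdent R N)) ∧
    Function.Surjective ⇑((LinearMap.rTensor N (laurentToQuot R p hp0).toLinearMap).comp
        (laurentIdent R N)) ∧
    Function.Bijective ⇑(basisMap R p d N) := by
  obtain ⟨b, hb⟩ := exists_basis_quotient_of_isUnit_leadingCoeff hlead
    (natDegree_eq_of_degree_eq_some hdeg)
  have : Module.Projective R (R[X] ⧸ Ideal.span {p}) := .of_basis b
  have hmul_inj := mulLeft_toLaurent_injective R
    (mem_nonZeroDivisors_of_leadingCoeff hlead.mem_nonZeroDivisors)
  have hsurj := laurentToQuot_surjective R p hp0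
  have hexact : Function.Exact (LinearMap.mulLeft R (toLaurent p))
      (laurentToQuot R p hp0).toLinearMap :=
    LinearMap.exact_iff.mpr (ker_laurentToQuot R p hp0)
  have hsquare := laurentIdent_comp_matrixMap R d β p hp N
  have hexact_M : Function.Exact (matrixMap R d β N)
      ((LinearMap.rTensor N (laurentToQuot R p hp0).toLinearMap).comp (laurentIdent R N)) :=
    (Function.Exact.iff_of_ladder_linearEquiv (e₃ := LinearEquiv.refl R _) hsquare
      (by rw [laurentIdentEquiv_toLinearMap]; rfl)).mp (rTensor_exact N hexact hsurj)
  refine ⟨?_, hexact_M.linearMap_ker_eq.symm, ?_, basisMap_bijective R p d N b hb⟩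
  · refine Function.Injective.of_comp (f := laurentIdentEquiv R N) ?_
    rw [← LinearEquiv.coe_toLinearMap, ← LinearMap.coe_comp, ← hsquare, LinearMap.coe_comp]
    exact (hexact.rTensor_injective_of_projective hmul_inj hsurj N).comp (LinearEquiv.injective _)
  · rw [← laurentIdentEquiv_toLinearMap, LinearMap.coe_comp]
    exact (LinearMap.rTensor_surjective N hsurj).comp (laurentIdentEquiv R N).surjective

/-- For `p = Σ_{i=0}^d (-1)^i β_i t^i ∈ R[t]` with `p(0) = β₀ = 1`, degree `d` and unit
leading coefficient, and any `R`-module `N`, the sequence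
`0 → ⊕_{n∈ℤ} N → ⊕_{n∈ℤ} N → N^{⊕d} → 0` is exact, where the first map is given by the
column-finite matrix `M_{ij} = (-1)^j (-1)^{i-j} β_{i-j}` and the second map is the
composite of the identification `⊕_{n∈ℤ} N ≅ R[t,t⁻¹] ⊗_R N`, reduction modulo `p`, and
the basis identification `(R[t]/⟨p⟩) ⊗_R N ≅ N^{⊕d}`. -/
theorem stmt_18 (R : Type*) [CommRing R] (d : ℕ) (hd : 0 < d) (β : ℕ → R) (hβ0 : β 0 = 1)
    (p : Polynomial R)
    (hp : p = ∑ i ∈ Finset.range (d + 1), Polynomial.C ((-1 : R) ^ i * β i) * X ^ i)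
    (hp0 : p.coeff 0 = 1) (hdeg : p.degree = d) (hlead : IsUnit p.leadingCoeff)
    (N : Type*) [AddCommGroup N] [Module R N] :
    Function.Injective ⇑(matrixMap R d β N) ∧
    LinearMap.range (matrixMap R d β N) =
      LinearMap.ker ((LinearMap.rTensor N (laurentToQuot R p hp0).toLinearMap).comp
        (laurentIdent R N)) ∧
    Function.Surjective ⇑((LinearMap.rTensor N (laurentToQuot R p hp0).toLinearMap).comp
        (laurentIdent R N)) ∧
    Function.Bijective ⇑(basisMap R p d N) :=
  stmt_18_general R d β p hp hp0 hdeg hlead N
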